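/- The level-k quantum dimension of the weight (k+h)ω_1 of D_r equals 1: D((k+h)ω_1) = 1. -/
import Mathlib


/-- Orthogonal coordinates `u_i(λ)` of `λ + ρ` for the weight
`λ = λ_1 ω_1 + ⋯ + λ_r ω_r` of `D_r` given in fundamental-weight coordinates. -/
noncomputable def uCoord (r : ℕ) (lam : ℕ → ℤ) (i : ℕ) : ℝ :=
  if i = r then ((lam r : ℝ) - (lam (r - 1) : ℝ)) / 2
  else (∑ j ∈ Finset.Icc i (r - 2), (lam j : ℝ))
      + ((lam (r - 1) : ℝ) + (lam r : ℝ)) / 2 + ((r : ℝ) - (i : ℝ))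

/-- The level-`k` quantum dimension of the weight `λ` of `D_r`
(`h = 2r - 2` is the Coxeter number), given by the product over the
positive roots `e_i - e_j`, `e_i + e_j` (`1 ≤ i < j ≤ r`). -/
noncomputable def qdimD (r k : ℕ) (lam : ℕ → ℤ) : ℝ :=
  ∏ p ∈ (Finset.Icc 1 r ×ˢ Finset.Icc 1 r).filter (fun p => p.1 < p.2),
    (Real.sin (Real.pi * (uCoord r lam p.1 - uCoord r lam p.2) / (2 * (r : ℝ) - 2 + (k : ℝ)))
      * Real.sin (Real.pi * (uCoord r lam p.1 + uCoord r lam p.2) / (2 * (r : ℝ) - 2 + (k : ℝ))))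
    / (Real.sin (Real.pi * ((p.2 : ℝ) - (p.1 : ℝ)) / (2 * (r : ℝ) - 2 + (k : ℝ)))
      * Real.sin (Real.pi * (2 * (r : ℝ) - (p.1 : ℝ) - (p.2 : ℝ)) / (2 * (r : ℝ) - 2 + (k : ℝ))))

lemma sin_pos_aux (n x : ℝ) (hn : 0 < n) (h0 : 0 < x) (h1 : x < n) :
    0 < Real.sin (Real.pi * x / n) := by
  apply Real.sin_pos_of_pos_of_lt_pi
  · positivity
  · rw [div_lt_iff₀ hn]
    nlinarith [Real.pi_pos]

lemma sin_pi_add' (y : ℝ) : Real.sin (Real.pi + y) = -Real.sin y := by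
  simp [Real.sin_add]

/-- The level-`k` quantum dimension of `(k + h)ω_1` equals `1`, where `h = 2r - 2`. -/
theorem stmt4 (r k : ℕ) (hr : 4 ≤ r) (hk : 1 ≤ k) :
    qdimD r k (fun i => if i = 1 then ((k + 2 * r - 2 : ℕ) : ℤ) else 0) = 1 := by
  set lam : ℕ → ℤ := fun i => if i = 1 then ((k + 2 * r - 2 : ℕ) : ℤ) else 0 with hlam
  have hr' : (4 : ℝ) ≤ r := by exact_mod_cast hr
  have hk' : (1 : ℝ) ≤ k := by exact_mod_cast hk
  have hn : (0 : ℝ) < 2 * (r : ℝ) - 2 + (k : ℝ) := by linarith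
  have hn0 : (2 * (r : ℝ) - 2 + (k : ℝ)) ≠ 0 := ne_of_gt hn
  have hlr1 : lam (r - 1) = 0 := by
    simp only [hlam]; rw [if_neg (by omega)]
  have hlr : lam r = 0 := by
    simp only [hlam]; rw [if_neg (by omega)]
  have hu1 : uCoord r lam 1 = (2 * (r : ℝ) - 2 + (k : ℝ)) + ((r : ℝ) - 1) := by
    unfold uCoord
    rw [if_neg (by omega : (1 : ℕ) ≠ r)]
    have hsum : ∑ j ∈ Finset.Icc 1 (r - 2), ((lam j : ℤ) : ℝ)
        = ((k + 2 * r - 2 : ℕ) : ℝ) := by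
      rw [Finset.sum_eq_single 1]
      · simp [hlam]
      · intro b _ hb1; simp [hlam, hb1]
      · intro h; exact absurd (Finset.mem_Icc.2 ⟨le_refl 1, by omega⟩) h
    rw [hsum, hlr1, hlr]
    have : ((k + 2 * r - 2 : ℕ) : ℝ) = (k : ℝ) + 2 * (r : ℝ) - 2 := by
      push_cast [Nat.cast_sub (show 2 ≤ k + 2 * r by omega)]; ring
    rw [this]; push_cast; ring
  have hui : ∀ i : ℕ, 2 ≤ i → i ≤ r → uCoord r lam i = (r : ℝ) - (i : ℝ) := by
    intro i h2 hir
    unfold uCoord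
    by_cases hi : i = r
    · subst hi; rw [if_pos rfl, hlr1, hlr]; simp
    · rw [if_neg hi]
      have hsum : ∑ j ∈ Finset.Icc i (r - 2), ((lam j : ℤ) : ℝ) = 0 := by
        apply Finset.sum_eq_zero
        intro j hj
        rw [Finset.mem_Icc] at hj
        simp only [hlam]
        rw [if_neg (by omega)]
        simp
      rw [hsum, hlr1, hlr]; ring
  unfold qdimD
  apply Finset.prod_eq_one
  intro p hp
  simp only [Finset.mem_filter, Finset.mem_product, Finset.mem_Icc] at hp
  obtain ⟨⟨⟨hi1, hir⟩, ⟨hj1, hjr⟩⟩, hij⟩ := hp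
  obtain ⟨i, j⟩ := p
  simp only at hi1 hir hj1 hjr hij ⊢
  have hirR : (i : ℝ) ≤ r := by exact_mod_cast hir
  have hjrR : (j : ℝ) ≤ r := by exact_mod_cast hjr
  have hi1R : (1 : ℝ) ≤ i := by exact_mod_cast hi1
  have hijR : (i : ℝ) < j := by exact_mod_cast hij
  have hd1 : Real.sin (Real.pi * ((j : ℝ) - (i : ℝ)) / (2 * (r : ℝ) - 2 + (k : ℝ))) ≠ 0 := by
    apply ne_of_gt
    apply sin_pos_aux _ _ hn (by linarith) (by linarith)
  have hirR' : (i : ℝ) ≤ r - 1 := by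
    have : i + 1 ≤ r := by omega
    have := (by exact_mod_cast this : (i : ℝ) + 1 ≤ r)
    linarith
  have hj2R : (2 : ℝ) ≤ j := by
    have : 2 ≤ j := by omega
    exact_mod_cast this
  have hd2 : Real.sin (Real.pi * (2 * (r : ℝ) - (i : ℝ) - (j : ℝ)) / (2 * (r : ℝ) - 2 + (k : ℝ))) ≠ 0 := by
    apply ne_of_gt
    apply sin_pos_aux _ _ hn (by linarith) (by linarith)
  have hden : Real.sin (Real.pi * ((j : ℝ) - (i : ℝ)) / (2 * (r : ℝ) - 2 + (k : ℝ)))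
      * Real.sin (Real.pi * (2 * (r : ℝ) - (i : ℝ) - (j : ℝ)) / (2 * (r : ℝ) - 2 + (k : ℝ))) ≠ 0 :=
    mul_ne_zero hd1 hd2
  by_cases hi : i = 1
  · subst hi
    rw [hu1, hui j (by omega) hjr]
    have e1 : Real.pi * ((2 * (r : ℝ) - 2 + (k : ℝ) + ((r : ℝ) - 1)) - ((r : ℝ) - (j : ℝ)))
        / (2 * (r : ℝ) - 2 + (k : ℝ))
        = Real.pi + Real.pi * ((j : ℝ) - (1 : ℕ)) / (2 * (r : ℝ) - 2 + (k : ℝ)) := by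
      field_simp
      ring
    have e2 : Real.pi * ((2 * (r : ℝ) - 2 + (k : ℝ) + ((r : ℝ) - 1)) + ((r : ℝ) - (j : ℝ)))
        / (2 * (r : ℝ) - 2 + (k : ℝ))
        = Real.pi + Real.pi * (2 * (r : ℝ) - (1 : ℕ) - (j : ℝ)) / (2 * (r : ℝ) - 2 + (k : ℝ)) := by
      field_simp
      ring
    rw [e1, e2, sin_pi_add', sin_pi_add', neg_mul_neg]
    exact div_self hden
  · have hi2 : 2 ≤ i := by omega
    rw [hui i hi2 hir, hui j (by omega) hjr]
    have e1 : ((r : ℝ) - (i : ℝ)) - ((r : ℝ) - (j : ℝ)) = (j : ℝ) - (i : ℝ) := by ring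
    have e2 : ((r : ℝ) - (i : ℝ)) + ((r : ℝ) - (j : ℝ)) = 2 * (r : ℝ) - (i : ℝ) - (j : ℝ) := by ring
    rw [e1, e2]
    exact div_self hden
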